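/- arXiv:2307.12264 — 2 statements merged into one kernel-verified Lean document; each statement's English description precedes it below -/
import Mathlib

section
/- Let $h(u) = \log_2\left(\sigma^2 + \sum_{j \in J} \frac{p_j \omega_j}{H^2 + u_j}\right)$ for $u \in \mathbb{R}_{\geq 0}^J$, with $\sigma^2, H > 0$ and $p_j, \omega_j > 0$. Then for any point $u^{(r)} \in \mathbb{R}_{\geq 0}^J$, $h(u) \geq h(u^{(r)}) - \sum_j \frac{p_j \omega_j}{(H^2 + u_j^{(r)})^2 (\sigma^2 + \sum_{j'} \frac{p_{j'}\omega_{j'}}{H^2 + u_{j'}^{(r)}})\ln 2}(u_j - u_j^{(r)})$. -/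
noncomputable def log2 (x : ℝ) : ℝ := Real.log x / Real.log 2

/-!
With `F(t) = s + ∑ⱼ aⱼ / tⱼ` and `F₀ = F(g)`, the ratio `F(x) / F₀` is the weighted mean of
the points `1` and `gⱼ / xⱼ` with weights `s / F₀` and `wⱼ = aⱼ / (gⱼ F₀)`. Jensen's inequality
for the concave logarithm gives `log F(x) - log F₀ ≥ ∑ⱼ wⱼ log (gⱼ / xⱼ)`, and the tangent bound
`log y ≥ 1 - 1 / y` turns the right-hand side into the linear term `-∑ⱼ wⱼ (xⱼ - gⱼ) / gⱼ`.
-/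

open Real Finset

theorem Real.sum_mul_log_le_log_one_sub_add {J : Type*} [Fintype J] (w z : J → ℝ)
    (hw : ∀ j, 0 ≤ w j) (hW : ∑ j, w j ≤ 1) (hz : ∀ j, 0 < z j) :
    ∑ j, w j * log (z j) ≤ log (1 - ∑ j, w j + ∑ j, w j * z j) := by
  have jensen := strictConcaveOn_log_Ioi.concaveOn.le_map_sum (t := univ)
    (w := fun i : Option J => i.elim (1 - ∑ j, w j) w)
    (p := fun i : Option J => i.elim (1 : ℝ) z)
    (by rintro (_ | j) -; exacts [sub_nonneg.2 hW, hw j])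
    (by simp [Fintype.sum_option])
    (by rintro (_ | j) - <;> simp [hz])
  simpa [Fintype.sum_option] using jensen

theorem Real.log_add_sum_div_sub_le {J : Type*} [Fintype J] {s : ℝ} (hs : 0 < s)
    (a g x : J → ℝ) (ha : ∀ j, 0 ≤ a j) (hg : ∀ j, 0 < g j) (hx : ∀ j, 0 < x j) :
    log (s + ∑ j, a j / g j) - ∑ j, a j / (g j ^ 2 * (s + ∑ j', a j' / g j')) * (x j - g j)
      ≤ log (s + ∑ j, a j / x j) := by
  set F₀ := s + ∑ j, a j / g j
  have hF₀ : 0 < F₀ :=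
    add_pos_of_pos_of_nonneg hs (sum_nonneg fun j _ => div_nonneg (ha j) (hg j).le)
  set w : J → ℝ := fun j => a j / (g j * F₀)
  have hw : ∀ j, 0 ≤ w j := fun j => div_nonneg (ha j) (mul_pos (hg j) hF₀).le
  have hsum_w : ∑ j, w j = 1 - s / F₀ := by
    simp only [w, div_mul_eq_div_div, ← sum_div]
    field_simp
    ring
  have hW : ∑ j, w j ≤ 1 := by rw [hsum_w]; linarith [div_pos hs hF₀]
  have jensen := sum_mul_log_le_log_one_sub_add w (fun j => g j / x j) hw hW
    (fun j => div_pos (hg j) (hx j))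
  have tangent : ∀ j, w j * (1 - x j / g j) ≤ w j * log (g j / x j) := fun j =>
    mul_le_mul_of_nonneg_left
      (by simpa using one_sub_inv_le_log_of_pos (div_pos (hg j) (hx j))) (hw j)
  have hmean : 1 - ∑ j, w j + ∑ j, w j * (g j / x j) = (s + ∑ j, a j / x j) / F₀ := by
    rw [hsum_w, add_div, sum_div]
    congr 1
    · ring
    · refine sum_congr rfl fun j _ => ?_
      simp only [w]
      field_simp [(hg j).ne', (hx j).ne']
  have hlinear : ∑ j, w j * (1 - x j / g j)
      = -∑ j, a j / (g j ^ 2 * F₀) * (x j - g j) := by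
    rw [← sum_neg_distrib]
    refine sum_congr rfl fun j _ => ?_
    simp only [w]
    field_simp [(hg j).ne']
    ring
  have hFx : 0 < s + ∑ j, a j / x j :=
    add_pos_of_pos_of_nonneg hs (sum_nonneg fun j _ => div_nonneg (ha j) (hx j).le)
  calc log F₀ - ∑ j, a j / (g j ^ 2 * F₀) * (x j - g j)
      = log F₀ + ∑ j, w j * (1 - x j / g j) := by rw [hlinear, sub_eq_add_neg]
    _ ≤ log F₀ + log ((s + ∑ j, a j / x j) / F₀) := by
      rw [← hmean]; gcongr; exact (sum_le_sum fun j _ => tangent j).trans jensen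
    _ = log (s + ∑ j, a j / x j) := by rw [log_div hFx.ne' hF₀.ne']; ring

/-- First-order Taylor lower bound (Proposition 2, eq. (40)) for
`h(u) = log₂(σ² + ∑_j p_j ω_j / (H² + u_j))` on the nonnegative orthant. -/
theorem stmt_8 (J : Type*) [Fintype J] (σ2 H : ℝ) (p ω : J → ℝ)
    (hσ : 0 < σ2) (hH : 0 < H) (hp : ∀ j, 0 < p j) (hω : ∀ j, 0 < ω j)
    (h : (J → ℝ) → ℝ)
    (hdef : ∀ u : J → ℝ, h u = log2 (σ2 + ∑ j, p j * ω j / (H ^ 2 + u j))) :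
    ∀ ur ∈ {u : J → ℝ | ∀ j, 0 ≤ u j}, ∀ u ∈ {u : J → ℝ | ∀ j, 0 ≤ u j},
      h u ≥ h ur - ∑ j,
        (p j * ω j / ((H ^ 2 + ur j) ^ 2 *
          (σ2 + ∑ j', p j' * ω j' / (H ^ 2 + ur j')) * Real.log 2)) *
        (u j - ur j) := by
  intro ur hur u hu
  have hpos : ∀ v ∈ {u : J → ℝ | ∀ j, 0 ≤ u j}, ∀ j, 0 < H ^ 2 + v j :=
    fun v hv j => add_pos_of_pos_of_nonneg (pow_pos hH 2) (hv j)
  have tangent := log_add_sum_div_sub_le hσ (fun j => p j * ω j) (fun j => H ^ 2 + ur j)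
    (fun j => H ^ 2 + u j) (fun j => (mul_pos (hp j) (hω j)).le) (hpos ur hur) (hpos u hu)
  simp only [add_sub_add_left_eq_sub] at tangent
  rw [hdef, hdef, log2, log2, ge_iff_le]
  calc _ = (log (σ2 + ∑ j, p j * ω j / (H ^ 2 + ur j)) - ∑ j, p j * ω j / ((H ^ 2 + ur j) ^ 2 *
          (σ2 + ∑ j', p j' * ω j' / (H ^ 2 + ur j'))) * (u j - ur j)) / log 2 := by
        rw [sub_div, sum_div]
        congr 1
        refine sum_congr rfl fun j _ => ?_
        rw [div_mul_eq_mul_div, div_mul_eq_mul_div, div_div]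
    _ ≤ _ := div_le_div_of_nonneg_right tangent (log_pos one_lt_two).le
end

section
/- For $p \in \mathbb{R}_{\geq 0}^J$ and any feasible point satisfying the SCA-approximated constraint $\hat\Lambda(p) - F^{(r)} - \sum_{j \neq k} G^{(r)}_j (p_j - p_j^{(r)}) \geq \eta$, the original constraint $\log_2(1 + \frac{p_k h_k}{\sigma^2 + \sum_{j\neq k} p_j h_j}) \geq \eta$ also holds, where $\hat\Lambda(p) = \log_2(\sigma^2 + \sum_j p_j h_j)$, $F^{(r)} = \log_2(\sigma^2 + \sum_{j\neq k} p_j^{(r)} h_j)$, and $G^{(r)}_j = \frac{h_j}{(\sigma^2 + \sum_{j'\neq k} p_{j'}^{(r)} h_{j'})\ln 2}$. -/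
lemma log2_le_log2_add_tangent {a b : ℝ} (ha : 0 < a) (hb : 0 < b) :
    log2 a ≤ log2 b + (a - b) / (b * Real.log 2) := by
  have hlog : Real.log a ≤ Real.log b + (a - b) / b := by
    have := Real.log_le_sub_one_of_pos (div_pos ha hb)
    rw [Real.log_div ha.ne' hb.ne', div_sub_one hb.ne'] at this
    linarith
  calc log2 a = Real.log a / Real.log 2 := rfl
    _ ≤ (Real.log b + (a - b) / b) / Real.log 2 := by gcongr
    _ = log2 b + (a - b) / (b * Real.log 2) := by rw [add_div, div_div]; rfl

lemma log2_one_add_div {a x : ℝ} (ha : 0 < a) (hax : 0 < a + x) :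
    log2 (1 + x / a) = log2 (a + x) - log2 a := by
  rw [log2, log2, log2, ← sub_div, ← Real.log_div hax.ne' ha.ne', add_div, div_self ha.ne',
    add_comm]

lemma Finset.sum_div_mul_sub {ι K : Type*} [Field K] (s : Finset ι) (h p q : ι → K) (c : K) :
    ∑ j ∈ s, h j / c * (p j - q j) = (∑ j ∈ s, p j * h j - ∑ j ∈ s, q j * h j) / c := by
  rw [← Finset.sum_sub_distrib, Finset.sum_div]
  exact Finset.sum_congr rfl fun j _ => by ring

/-- The SCA-approximated feasible region is a subset of the original one
(Proposition 1 / eq. (29)): if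
`Λ̂(p) - F⁽ʳ⁾ - ∑_{j≠k} G_j⁽ʳ⁾ (p_j - p_j⁽ʳ⁾) ≥ η`
then `log₂(1 + p_k h_k / (σ² + ∑_{j≠k} p_j h_j)) ≥ η`. -/
theorem stmt_15 (J : Type*) [Fintype J] [DecidableEq J] (k : J)
    (σ2 η : ℝ) (h p pr : J → ℝ)
    (hσ : 0 < σ2) (hh : ∀ j, 0 < h j) (hp : ∀ j, 0 ≤ p j) (hpr : ∀ j, 0 ≤ pr j)
    (happrox :
      log2 (σ2 + ∑ j, p j * h j) -
        log2 (σ2 + ∑ j ∈ Finset.univ.erase k, pr j * h j) -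
        ∑ j ∈ Finset.univ.erase k,
          (h j / ((σ2 + ∑ j' ∈ Finset.univ.erase k, pr j' * h j') * Real.log 2)) *
            (p j - pr j) ≥ η) :
    log2 (1 + p k * h k / (σ2 + ∑ j ∈ Finset.univ.erase k, p j * h j)) ≥ η := by
  set S := ∑ j ∈ Finset.univ.erase k, p j * h j
  set Sr := ∑ j ∈ Finset.univ.erase k, pr j * h j
  have hS : 0 ≤ S := Finset.sum_nonneg fun j _ => mul_nonneg (hp j) (hh j).le
  have hSr : 0 ≤ Sr := Finset.sum_nonneg fun j _ => mul_nonneg (hpr j) (hh j).le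
  have hk : 0 ≤ p k * h k := mul_nonneg (hp k) (hh k).le
  have hsplit : σ2 + ∑ j, p j * h j = σ2 + S + p k * h k := by
    rw [← Finset.add_sum_erase _ _ (Finset.mem_univ k)]
    ring
  rw [Finset.sum_div_mul_sub, hsplit, ← add_sub_add_left_eq_sub S Sr σ2] at happrox
  rw [log2_one_add_div (by positivity) (by positivity)]
  linarith [log2_le_log2_add_tangent (a := σ2 + S) (b := σ2 + Sr) (by positivity) (by positivity)]
end
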